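/- Let α, β, γ, δ, ε be real numbers satisfying 0 ≤ β ≤ 1, 0 ≤ γ ≤ 1, 0 ≤ δ ≤ α, 0 ≤ ε ≤ α, α ≤ 2, and δ + ε ≤ 2. Define f₁ = α − [β + α/2 − 1]^+, f₂ = δ + ε − α, and f₃ = [δ + ε/2 + γ − 2]^+, where [x]^+ = max{x, 0}. Then (2 + min{f₁, [f₂ − f₃]^+}) / (2 − min{β, γ}) ≤ 5/2. -/
import Mathlib

theorem stmt_2 (α β γ δ ε : ℝ)
    (hβ0 : 0 ≤ β) (hβ1 : β ≤ 1) (hγ0 : 0 ≤ γ) (hγ1 : γ ≤ 1)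
    (hδ0 : 0 ≤ δ) (hδα : δ ≤ α) (hε0 : 0 ≤ ε) (hεα : ε ≤ α) (hα2 : α ≤ 2)
    (hδε : δ + ε ≤ 2) :
    (2 + min (α - max (β + α / 2 - 1) 0)
        (max ((δ + ε - α) - max (δ + ε / 2 + γ - 2) 0) 0)) / (2 - min β γ) ≤ 5 / 2 := by
  have hpos : 0 < 2 - min β γ := by
    rcases min_cases β γ with ⟨h, _⟩ | ⟨h, _⟩ <;> rw [h] <;> linarith
  rw [div_le_iff₀ hpos]
  rcases max_cases (β + α / 2 - 1) 0 with ⟨h1, h1'⟩ | ⟨h1, h1'⟩ <;> rw [h1] <;>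
  rcases max_cases (δ + ε / 2 + γ - 2) 0 with ⟨h2, h2'⟩ | ⟨h2, h2'⟩ <;> rw [h2] <;>
  rcases max_cases ((δ + ε - α) - _) 0 with ⟨h3, h3'⟩ | ⟨h3, h3'⟩ <;> rw [h3] <;>
  rcases min_cases (α - _) _ with ⟨h4, h4'⟩ | ⟨h4, h4'⟩ <;> rw [h4] <;>
  rcases min_cases β γ with ⟨h5, h5'⟩ | ⟨h5, h5'⟩ <;> rw [h5] <;>
  linarith
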